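/- Let X be a normal mean-variance mixture X = μ + Στ W + √W Z with Z ~ N(0, Σ), W ~ GIG(λ, 1, ψ) independent of Z, and write γ = Στ. If μ = -L(τ,ψ,λ) τ and Σ = (√ψ / M_{λ+1}(√ψ)) (I_N + ((L(τ,ψ,λ)-1)/(τ'τ)) ττ'), where M_{λ+1}(√ψ) = K_{λ+1}(√ψ)/K_λ(√ψ), N_{λ+2}(√ψ) = K_{λ+2}(√ψ)K_λ(√ψ)/K_{λ+1}(√ψ)^2, and L(τ,ψ,λ) = (√(1 + 4(N_{λ+2}(√ψ)-1) τ'τ) - 1)/(2 τ'τ (N_{λ+2}(√ψ)-1)), then E(X) = 0 and Var(X) = I_N. -/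

import Mathlib

/-!
Conditionally on `W`, the vector `X = μ + γ W + √W Z` has mean `μ + γ W` and covariance `W Σ`;
independence of `W` and `Z` turns this into `E X = μ + γ E W` and
`Cov X = E W · Σ + Var W · γ γ'`. Since `τ τ' τ = (τ'τ) τ`, the vector `γ = Στ` is the multiple
`c L τ` of `τ`, where `c = √ψ / M_{λ+1}(√ψ)`, and the Bessel moments of the GIG law give
`c E W = 1` and `c² E W² = N_{λ+2}(√ψ)`. Hence `E X = -L τ + L τ = 0` and
`Cov X = I + ((N_{λ+2} - 1) L² + (L - 1)/(τ'τ)) τ τ'`, whose bracket vanishes because `L` is the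
positive root of `(τ'τ)(N_{λ+2} - 1) L² + L - 1 = 0`.
-/

open MeasureTheory ProbabilityTheory Matrix

noncomputable def meanVarianceMixture {Ω ι : Type*} (m g : ι → ℝ) (W : Ω → ℝ)
    (Z : Ω → ι → ℝ) : Ω → ι → ℝ :=
  fun ω i => m i + g i * W ω + Real.sqrt (W ω) * Z ω i

section MeanVarianceMixture

variable {Ω ι : Type*} [MeasurableSpace Ω] {μ : Measure Ω} {W : Ω → ℝ} {Z : Ω → ι → ℝ}

lemma memLp_two_sqrt (hW0 : ∀ ω, 0 ≤ W ω) (hW : Integrable W μ) :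
    MemLp (fun ω => Real.sqrt (W ω)) 2 μ := by
  refine (memLp_two_iff_integrable_sq
    (Real.continuous_sqrt.comp_aestronglyMeasurable hW.1)).mpr ?_
  simpa only [Real.sq_sqrt (hW0 _)] using hW

lemma integral_comp_mul_eq_zero_of_indepFun {φ : ℝ → ℝ} (hφ : Measurable φ)
    (hInd : IndepFun W Z μ) (hφW : AEStronglyMeasurable (fun ω => φ (W ω)) μ)
    {i : ι} (hZ : AEStronglyMeasurable (fun ω => Z ω i) μ) (hZmean : ∫ ω, Z ω i ∂μ = 0) :
    ∫ ω, φ (W ω) * Z ω i ∂μ = 0 := by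
  have := (hInd.comp hφ (measurable_pi_apply i)).integral_fun_mul_eq_mul_integral hφW hZ
  simpa [hZmean] using this

variable [IsProbabilityMeasure μ]

lemma integral_affine_mul_affine (hW : MemLp W 2 μ) (a b c d : ℝ) :
    ∫ ω, (a + b * W ω) * (c + d * W ω) ∂μ =
      a * c + (a * d + b * c) * (∫ ω, W ω ∂μ) + b * d * ∫ ω, W ω ^ 2 ∂μ := by
  simp_rw [show ∀ w : ℝ, (a + b * w) * (c + d * w) = a * c + (a * d + b * c) * w + b * d * w ^ 2
    from fun w => by ring]
  have hW1 := hW.integrable one_le_two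
  rw [integral_add ((integrable_const _).fun_add (hW1.const_mul _)) (hW.integrable_sq.const_mul _),
    integral_add (integrable_const _) (hW1.const_mul _), integral_const, integral_const_mul,
    integral_const_mul]
  simp

lemma integral_meanVarianceMixture (hW0 : ∀ ω, 0 ≤ W ω) (hW : MemLp W 2 μ)
    (hZ : ∀ i, MemLp (fun ω => Z ω i) 2 μ) (hInd : IndepFun W Z μ)
    (hZmean : ∀ i, ∫ ω, Z ω i ∂μ = 0) (m g : ι → ℝ) (i : ι) :
    ∫ ω, meanVarianceMixture m g W Z ω i ∂μ = m i + g i * ∫ ω, W ω ∂μ := by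
  have hW1 := hW.integrable one_le_two
  have hsqrtZ : Integrable (fun ω => Real.sqrt (W ω) * Z ω i) μ :=
    (hInd.comp Real.continuous_sqrt.measurable (measurable_pi_apply i)).integrable_mul
      ((memLp_two_sqrt hW0 hW1).integrable one_le_two) ((hZ i).integrable one_le_two)
  unfold meanVarianceMixture
  rw [integral_add ((integrable_const _).fun_add (hW1.const_mul _)) hsqrtZ,
    integral_add (integrable_const _) (hW1.const_mul _), integral_const, integral_const_mul,
    integral_comp_mul_eq_zero_of_indepFun Real.continuous_sqrt.measurable hInd
      (memLp_two_sqrt hW0 hW1).1 (hZ i).1 (hZmean i)]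
  simp

lemma integral_meanVarianceMixture_mul (hW0 : ∀ ω, 0 ≤ W ω) (hW : MemLp W 2 μ)
    (hZ : ∀ i, MemLp (fun ω => Z ω i) 2 μ) (hInd : IndepFun W Z μ)
    (hZmean : ∀ i, ∫ ω, Z ω i ∂μ = 0) (m g : ι → ℝ) (i j : ι) :
    ∫ ω, meanVarianceMixture m g W Z ω i * meanVarianceMixture m g W Z ω j ∂μ =
      (∫ ω, (m i + g i * W ω) * (m j + g j * W ω) ∂μ) +
        (∫ ω, W ω ∂μ) * ∫ ω, Z ω i * Z ω j ∂μ := by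
  have hW1 := hW.integrable one_le_two
  have hA : ∀ k, MemLp (fun ω => m k + g k * W ω) 2 μ :=
    fun k => (memLp_const (m k)).add (hW.const_mul (g k))
  have hAA : Integrable (fun ω => (m i + g i * W ω) * (m j + g j * W ω)) μ :=
    (hA i).integrable_mul (hA j)
  have hAsqrt : ∀ k, Measurable fun w => (m k + g k * w) * Real.sqrt w := fun k => by fun_prop
  have hAsqrtZ : ∀ k l,
      Integrable (fun ω => (m k + g k * W ω) * Real.sqrt (W ω) * Z ω l) μ :=
    fun k l => (hInd.comp (hAsqrt k) (measurable_pi_apply l)).integrable_mul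
      ((hA k).integrable_mul (memLp_two_sqrt hW0 hW1)) ((hZ l).integrable one_le_two)
  have hAsqrtZ0 : ∀ k l, ∫ ω, (m k + g k * W ω) * Real.sqrt (W ω) * Z ω l ∂μ = 0 :=
    fun k l => integral_comp_mul_eq_zero_of_indepFun (hAsqrt k) hInd
      ((hAsqrt k).comp_aemeasurable hW.1.aemeasurable).aestronglyMeasurable (hZ l).1 (hZmean l)
  have hIndZZ : IndepFun W (fun ω => Z ω i * Z ω j) μ :=
    hInd.comp measurable_id ((measurable_pi_apply i).mul (measurable_pi_apply j))
  have hZZ : Integrable (fun ω => Z ω i * Z ω j) μ := (hZ i).integrable_mul (hZ j)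
  have hWZZ : Integrable (fun ω => W ω * (Z ω i * Z ω j)) μ := hIndZZ.integrable_mul hW1 hZZ
  have hexpand : ∀ ω, meanVarianceMixture m g W Z ω i * meanVarianceMixture m g W Z ω j =
      (m i + g i * W ω) * (m j + g j * W ω) + (m i + g i * W ω) * Real.sqrt (W ω) * Z ω j
        + (m j + g j * W ω) * Real.sqrt (W ω) * Z ω i + W ω * (Z ω i * Z ω j) := fun ω => by
    simp only [meanVarianceMixture]
    linear_combination (Z ω i * Z ω j) * Real.mul_self_sqrt (hW0 ω)
  simp_rw [hexpand]
  rw [integral_add ((hAA.fun_add (hAsqrtZ i j)).fun_add (hAsqrtZ j i)) hWZZ,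
    integral_add (hAA.fun_add (hAsqrtZ i j)) (hAsqrtZ j i), integral_add hAA (hAsqrtZ i j),
    hAsqrtZ0, hAsqrtZ0, add_zero, add_zero,
    hIndZZ.integral_fun_mul_eq_mul_integral hW.1 hZZ.1]

lemma integral_meanVarianceMixture_mul_sub (hW0 : ∀ ω, 0 ≤ W ω) (hW : MemLp W 2 μ)
    (hZ : ∀ i, MemLp (fun ω => Z ω i) 2 μ) (hInd : IndepFun W Z μ)
    (hZmean : ∀ i, ∫ ω, Z ω i ∂μ = 0) (m g : ι → ℝ) (i j : ι) :
    (∫ ω, meanVarianceMixture m g W Z ω i * meanVarianceMixture m g W Z ω j ∂μ) -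
        (∫ ω, meanVarianceMixture m g W Z ω i ∂μ) * (∫ ω, meanVarianceMixture m g W Z ω j ∂μ) =
      g i * g j * ((∫ ω, W ω ^ 2 ∂μ) - (∫ ω, W ω ∂μ) ^ 2) +
        (∫ ω, W ω ∂μ) * ∫ ω, Z ω i * Z ω j ∂μ := by
  rw [integral_meanVarianceMixture_mul hW0 hW hZ hInd hZmean,
    integral_meanVarianceMixture hW0 hW hZ hInd hZmean,
    integral_meanVarianceMixture hW0 hW hZ hInd hZmean, integral_affine_mul_affine hW]
  ring

end MeanVarianceMixture

lemma mul_sq_add_self_eq_one {a t L : ℝ} (ha : 0 < a) (ht : 0 < t)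
    (hL : L = (Real.sqrt (1 + 4 * a * t) - 1) / (2 * t * a)) :
    t * a * L ^ 2 + L = 1 := by
  have hs := Real.sq_sqrt (show 0 ≤ 1 + 4 * a * t by positivity)
  rw [hL]
  generalize Real.sqrt (1 + 4 * a * t) = s at hs
  field_simp
  linear_combination hs

lemma one_add_smul_vecMulVec_mulVec_self {n R : Type*} [Fintype n] [DecidableEq n] [CommRing R]
    (k : R) (v : n → R) : (1 + k • vecMulVec v v) *ᵥ v = (1 + k * (v ⬝ᵥ v)) • v := by
  rw [add_mulVec, one_mulVec, smul_mulVec, vecMulVec_mulVec, op_smul_eq_smul, smul_smul,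
    add_smul, one_smul]

theorem stmt6_general {Ω : Type*} [MeasureSpace Ω] [IsProbabilityMeasure (ℙ : Measure Ω)]
    {N : ℕ} (W : Ω → ℝ) (Z X : Ω → Fin N → ℝ)
    (τ : Fin N → ℝ) (ψ Kl Kl1 Kl2 : ℝ)
    (hψ : 0 < ψ) (hτ : τ ≠ 0)
    (hKl : 0 < Kl) (hKl1 : 0 < Kl1)
    -- `N_{λ+2}(√ψ) > 1`, i.e. `Var W > 0` (a property of the Bessel ratios)
    (hN2 : Kl1 ^ 2 < Kl2 * Kl)
    (M Nn L : ℝ)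
    (hM : M = Kl1 / Kl)
    (hNn : Nn = Kl2 * Kl / Kl1 ^ 2)
    (hL : L = (Real.sqrt (1 + 4 * (Nn - 1) * (τ ⬝ᵥ τ)) - 1) /
        (2 * (τ ⬝ᵥ τ) * (Nn - 1)))
    (μv : Fin N → ℝ) (Sig : Matrix (Fin N) (Fin N) ℝ)
    (hμ : μv = -(L • τ))
    (hSig : Sig = (Real.sqrt ψ / M) •
        ((1 : Matrix (Fin N) (Fin N) ℝ) + ((L - 1) / (τ ⬝ᵥ τ)) • Matrix.vecMulVec τ τ))
    (hWpos : ∀ ω, 0 < W ω)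
    (hWmem : MemLp W 2 ℙ) (hZmem : ∀ i, MemLp (fun ω => Z ω i) 2 ℙ)
    (hInd : IndepFun W Z ℙ)
    (hZmean : ∀ i, ∫ ω, Z ω i = 0)
    (hZcov : ∀ i j, ∫ ω, Z ω i * Z ω j = Sig i j)
    (hW1 : ∫ ω, W ω = Kl1 / (Kl * Real.sqrt ψ))
    (hW2 : ∫ ω, (W ω) ^ 2 = Kl2 / (Kl * ψ))
    (hX : ∀ ω i, X ω i = μv i + (Sig.mulVec τ) i * W ω + Real.sqrt (W ω) * Z ω i) :
    (∀ i, ∫ ω, X ω i = 0) ∧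
    (∀ i j, (∫ ω, X ω i * X ω j) - (∫ ω, X ω i) * (∫ ω, X ω j)
        = if i = j then 1 else 0) := by
  set t := τ ⬝ᵥ τ
  set c := Real.sqrt ψ / M with hc
  have ht : 0 < t := by simpa using dotProduct_self_star_pos_iff.mpr hτ
  have hNn1 : 0 < Nn - 1 := by rw [hNn, sub_pos, one_lt_div (by positivity)]; exact hN2
  have hquad : (Nn - 1) * L ^ 2 + (L - 1) / t = 0 := by
    have := mul_sq_add_self_eq_one hNn1 ht hL
    field_simp
    linear_combination this
  have hcW1 : c * ∫ ω, W ω = 1 := by rw [hW1, hc, hM]; field_simp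
  have hcW2 : c ^ 2 * ∫ ω, W ω ^ 2 = Nn := by
    rw [hW2, hc, hM, hNn, div_pow, Real.sq_sqrt hψ.le]
    field_simp
  have hγ : Sig *ᵥ τ = (c * L) • τ := by
    rw [hSig, smul_mulVec, one_add_smul_vecMulVec_mulVec_self, smul_smul]
    congr 1
    field_simp
    ring
  have hXmix : X = meanVarianceMixture μv (Sig *ᵥ τ) W Z := funext fun ω => funext (hX ω)
  have hW0 : ∀ ω, 0 ≤ W ω := fun ω => (hWpos ω).le
  have hmean : ∀ i, ∫ ω, X ω i = 0 := fun i => by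
    rw [hXmix, integral_meanVarianceMixture hW0 hWmem hZmem hInd hZmean, hμ, hγ]
    simp only [Pi.neg_apply, Pi.smul_apply, smul_eq_mul]
    linear_combination L * τ i * hcW1
  refine ⟨hmean, fun i j => ?_⟩
  rw [hXmix, integral_meanVarianceMixture_mul_sub hW0 hWmem hZmem hInd hZmean, hZcov, hγ, hSig]
  simp only [Pi.smul_apply, smul_eq_mul, Matrix.smul_apply, Matrix.add_apply, Matrix.one_apply,
    vecMulVec_apply]
  linear_combination L ^ 2 * τ i * τ j * hcW2 + τ i * τ j * hquad
    + ((if i = j then 1 else 0) + (L - 1) / t * (τ i * τ j)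
      - L ^ 2 * τ i * τ j * (c * (∫ ω, W ω) + 1)) * hcW1

/-- Standardisation of the generalised hyperbolic distribution (Proposition 1):
`X = μ + Στ W + √W Z` with `Z` mean-zero with covariance `Σ`, independent of
`W ~ GIG(λ, 1, ψ)` (whose moments are the Bessel ratios `E W = K_{λ+1}(√ψ)/(K_λ(√ψ)√ψ)`,
`E W² = K_{λ+2}(√ψ)/(K_λ(√ψ)ψ)`).  If `μ = -L(τ,ψ,λ) τ` and
`Σ = (√ψ / M_{λ+1}(√ψ)) (I + ((L-1)/(τ'τ)) ττ')`, then `E X = 0` and `Var X = I`. -/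
theorem stmt6 {Ω : Type*} [MeasureSpace Ω] [IsProbabilityMeasure (ℙ : Measure Ω)]
    {N : ℕ} (W : Ω → ℝ) (Z X : Ω → Fin N → ℝ)
    (τ : Fin N → ℝ) (ψ lam Kl Kl1 Kl2 : ℝ)
    (hψ : 0 < ψ) (hτ : τ ≠ 0)
    (hKl : 0 < Kl) (hKl1 : 0 < Kl1) (hKl2 : 0 < Kl2)
    -- `N_{λ+2}(√ψ) > 1`, i.e. `Var W > 0` (a property of the Bessel ratios)
    (hN2 : Kl1 ^ 2 < Kl2 * Kl)
    (M Nn L : ℝ)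
    (hM : M = Kl1 / Kl)
    (hNn : Nn = Kl2 * Kl / Kl1 ^ 2)
    (hL : L = (Real.sqrt (1 + 4 * (Nn - 1) * (τ ⬝ᵥ τ)) - 1) /
        (2 * (τ ⬝ᵥ τ) * (Nn - 1)))
    (μv : Fin N → ℝ) (Sig : Matrix (Fin N) (Fin N) ℝ)
    (hμ : μv = -(L • τ))
    (hSig : Sig = (Real.sqrt ψ / M) •
        ((1 : Matrix (Fin N) (Fin N) ℝ) + ((L - 1) / (τ ⬝ᵥ τ)) • Matrix.vecMulVec τ τ))
    (hWpos : ∀ ω, 0 < W ω)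
    (hWmem : MemLp W 2 ℙ) (hZmem : ∀ i, MemLp (fun ω => Z ω i) 2 ℙ)
    (hInd : IndepFun W Z ℙ)
    (hZmean : ∀ i, ∫ ω, Z ω i = 0)
    (hZcov : ∀ i j, ∫ ω, Z ω i * Z ω j = Sig i j)
    (hW1 : ∫ ω, W ω = Kl1 / (Kl * Real.sqrt ψ))
    (hW2 : ∫ ω, (W ω) ^ 2 = Kl2 / (Kl * ψ))
    (hX : ∀ ω i, X ω i = μv i + (Sig.mulVec τ) i * W ω + Real.sqrt (W ω) * Z ω i) :
    (∀ i, ∫ ω, X ω i = 0) ∧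
    (∀ i j, (∫ ω, X ω i * X ω j) - (∫ ω, X ω i) * (∫ ω, X ω j)
        = if i = j then 1 else 0) :=
  stmt6_general W Z X τ ψ Kl Kl1 Kl2 hψ hτ hKl hKl1 hN2 M Nn L hM hNn hL μv Sig hμ hSig hWpos hWmem
    hZmem hInd hZmean hZcov hW1 hW2 hX
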